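/- Let P be a c-complete cd-structure on a category 𝒳 and let 𝒞 be a category. If a presheaf F : 𝒳^op → 𝒞 sends every distinguished square of P to a pullback square in 𝒞, then F is a sheaf for the c-topology τ_P^c. -/

import Mathlib

/-!
By c-completeness every covering sieve contains a simple cover, so it suffices to handle simple
covers, by induction on their construction. For a cover glued along a distinguished square, the
sections over `Y` and over `A` amalgamate separately; they agree over `B` because the pullbacks of
both covers to `B` meet in a covering sieve, for which the presheaf is separated (by the same
induction), and the pullback square `F(X) = F(A) ×_{F(B)} F(Y)` glues them. Passing from a simple cover `R` to a sieve
`S ⊇ R` only needs separatedness on the pullbacks of `R`, which are again covering.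
-/

open CategoryTheory Limits Opposite

universe w v u

namespace CdFormal

variable {C : Type u} [Category.{v} C] {D : Type w} [Category.{v} D]

/-- A commutative square in `C`: `B → Y`, `B → A`, `p : Y → X`, `i : A → X`. -/
structure CDSquare (C : Type u) [Category.{v} C] where
  B : C
  A : C
  Y : C
  X : C
  e : B ⟶ A
  q : B ⟶ Y
  i : A ⟶ X
  p : Y ⟶ X
  w : q ≫ p = e ≫ i

/-- The sieve on `X` generated by the feet `{i, p}` of a square. -/
def CDSquare.sieve (Q : CDSquare C) : Sieve Q.X where
  arrows Z g := (∃ h : Z ⟶ Q.A, g = h ≫ Q.i) ∨ (∃ h : Z ⟶ Q.Y, g = h ≫ Q.p)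
  downward_closed := by
    rintro Z Z' g (⟨h, rfl⟩ | ⟨h, rfl⟩) g'
    · exact Or.inl ⟨g' ≫ h, by simp⟩
    · exact Or.inr ⟨g' ≫ h, by simp⟩

/-- The c-topology associated to a cd-structure `P`: the coarsest Grothendieck
topology for which the sieve generated by the feet of each distinguished square is covering. -/
def cTopology (P : Set (CDSquare C)) : GrothendieckTopology C :=
  sInf {J | ∀ Q ∈ P, Q.sieve ∈ J Q.X}

/-- The class of simple `P`-covers. -/
inductive IsSimpleCover (P : Set (CDSquare C)) : (X : C) → Presieve X → Prop
  | iso {X' X : C} (f : X' ⟶ X) (hf : IsIso f) : IsSimpleCover P X (Presieve.singleton f)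
  | glue (Q : CDSquare C) (hQ : Q ∈ P) (RY : Presieve Q.Y) (RA : Presieve Q.A)
      (hY : IsSimpleCover P Q.Y RY) (hA : IsSimpleCover P Q.A RA) :
      IsSimpleCover P Q.X (fun Z g =>
        (∃ h : Z ⟶ Q.Y, RY h ∧ g = h ≫ Q.p) ∨ (∃ h : Z ⟶ Q.A, RA h ∧ g = h ≫ Q.i))

/-- `P` is c-complete: every covering sieve for the associated c-topology contains a
simple `P`-cover. -/
def IsCComplete (P : Set (CDSquare C)) : Prop :=
  ∀ ⦃X : C⦄ (S : Sieve X), S ∈ cTopology P X →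
    ∃ R : Presieve X, IsSimpleCover P X R ∧ ∀ ⦃Z⦄ (g : Z ⟶ X), R g → S g

/-- `ρ(X)`: the sheafification of the presheaf represented by `X`. -/
noncomputable def rho (J : GrothendieckTopology C) (X : C) : Sheaf J (Type (max u v)) :=
  (presheafToSheaf J _).obj (yoneda.obj X ⋙ uliftFunctor.{u})

/-- Functoriality of `ρ`. -/
noncomputable def rhoMap (J : GrothendieckTopology C) {X Y : C} (f : X ⟶ Y) :
    rho J X ⟶ rho J Y :=
  (presheafToSheaf J _).map (Functor.whiskerRight (yoneda.map f) uliftFunctor.{u})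

lemma rhoMap_comp (J : GrothendieckTopology C) {X Y Z : C} (f : X ⟶ Y) (g : Y ⟶ Z) :
    rhoMap J (f ≫ g) = rhoMap J f ≫ rhoMap J g := by
  simp only [rhoMap, yoneda.map_comp, Functor.whiskerRight_comp, Functor.map_comp]
  rfl

instance instHasColimitsOfShapePairSheafRho (J : GrothendieckTopology C) :
    HasColimitsOfShape (Discrete WalkingPair) (Sheaf J (Type (max u v))) :=
  Sheaf.instHasColimitsOfShape

/-- The canonical comparison morphism
`ρ(Y) ⊔ (ρ(B) ×_{ρ(A)} ρ(B)) ⟶ ρ(Y) ×_{ρ(X)} ρ(Y)` associated to a square. -/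
noncomputable def regCompare (J : GrothendieckTopology C) (Q : CDSquare C) :
    (rho J Q.Y) ⨿ (pullback (rhoMap J Q.e) (rhoMap J Q.e)) ⟶
      pullback (rhoMap J Q.p) (rhoMap J Q.p) :=
  coprod.desc (pullback.lift (𝟙 _) (𝟙 _) rfl)
    (pullback.lift (pullback.fst _ _ ≫ rhoMap J Q.q) (pullback.snd _ _ ≫ rhoMap J Q.q)
      (by
        rw [Category.assoc, Category.assoc, ← rhoMap_comp, Q.w, rhoMap_comp,
          ← Category.assoc, ← Category.assoc, pullback.condition]))

/-- `P` is c-regular. -/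
def IsCRegular (P : Set (CDSquare C)) : Prop :=
  ∀ Q ∈ P, IsPullback Q.q Q.e Q.p Q.i ∧ Mono Q.i ∧ Epi (regCompare (cTopology P) Q)

/-- The image of a square under a functor. -/
@[simps]
def CDSquare.map (F : C ⥤ D) (Q : CDSquare C) : CDSquare D where
  B := F.obj Q.B
  A := F.obj Q.A
  Y := F.obj Q.Y
  X := F.obj Q.X
  e := F.map Q.e
  q := F.map Q.q
  i := F.map Q.i
  p := F.map Q.p
  w := by rw [← F.map_comp, ← F.map_comp, Q.w]

/-- The induced cd-structure on a slice category. -/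
def sliceCd (P : Set (CDSquare C)) (X : C) : Set (CDSquare (Over X)) :=
  {Q | Q.map (Over.forget X) ∈ P}

/-- A dimension function on a category: an initial object `empty` together with a
dimension taking the minimal value `bot` exactly on objects isomorphic to `empty`. -/
structure DimensionFunction (C : Type u) [Category.{v} C] (Λ : Type w) [Preorder Λ] where
  empty : C
  init : Nonempty (IsInitial empty)
  dim : C → Λ
  bot : Λ
  bot_le : ∀ X : C, bot ≤ dim X
  dim_eq_bot_iff : ∀ X : C, dim X = bot ↔ Nonempty (X ≅ empty)

/-- A cd-structure is compatible with a dimension function. -/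
def CompatibleWithDim {Λ : Type w} [Preorder Λ] (P : Set (CDSquare C))
    (Dm : DimensionFunction C Λ) : Prop :=
  ∃ P' : Set (CDSquare C), P' ⊆ P ∧
    (∀ Q ∈ P', Dm.dim Q.A ≤ Dm.dim Q.X ∧ Dm.dim Q.Y ≤ Dm.dim Q.X ∧ Dm.dim Q.B < Dm.dim Q.X) ∧
    ∀ Q ∈ P, ∃ R : Presieve Q.X, IsSimpleCover P' Q.X R ∧
      ∀ ⦃Z⦄ (g : Z ⟶ Q.X), R g → Q.sieve g

end CdFormal

namespace CdFormal

section

universe w'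

variable {C : Type u} [Category.{v} C] {P : Set (CDSquare C)}

def CDSquare.gluePresieve (Q : CDSquare C) (RY : Presieve Q.Y) (RA : Presieve Q.A) :
    Presieve Q.X :=
  fun _ g => (∃ h, RY h ∧ g = h ≫ Q.p) ∨ (∃ h, RA h ∧ g = h ≫ Q.i)

theorem CDSquare.generate_le_pullback_p_generate_gluePresieve (Q : CDSquare C)
    (RY : Presieve Q.Y) (RA : Presieve Q.A) :
    Sieve.generate RY ≤ (Sieve.generate (Q.gluePresieve RY RA)).pullback Q.p :=
  (Sieve.generate_le_iff _ _).2 fun _ h hh =>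
    Sieve.le_generate (Q.gluePresieve RY RA) _ (h ≫ Q.p) (Or.inl ⟨h, hh, rfl⟩)

theorem CDSquare.generate_le_pullback_i_generate_gluePresieve (Q : CDSquare C)
    (RY : Presieve Q.Y) (RA : Presieve Q.A) :
    Sieve.generate RA ≤ (Sieve.generate (Q.gluePresieve RY RA)).pullback Q.i :=
  (Sieve.generate_le_iff _ _).2 fun _ h hh =>
    Sieve.le_generate (Q.gluePresieve RY RA) _ (h ≫ Q.i) (Or.inr ⟨h, hh, rfl⟩)

theorem CDSquare.sieve_mem_cTopology {Q : CDSquare C} (hQ : Q ∈ P) :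
    Q.sieve ∈ cTopology P Q.X :=
  (GrothendieckTopology.mem_sInf _ _).2 fun _ hJ => hJ Q hQ

theorem IsSimpleCover.generate_mem_cTopology {X : C} {R : Presieve X}
    (h : IsSimpleCover P X R) : Sieve.generate R ∈ cTopology P X := by
  induction h with
  | iso f _ =>
    rw [Sieve.generate_of_singleton_isSplitEpi]
    exact (cTopology P).top_mem _
  | glue Q hQ RY RA _ _ ihY ihA =>
    refine (cTopology P).transitive (CDSquare.sieve_mem_cTopology hQ) _ ?_
    rintro Z f (⟨h, rfl⟩ | ⟨h, rfl⟩) <;> rw [Sieve.pullback_comp]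
    · exact (cTopology P).superset_covering
        (Sieve.pullback_monotone h (Q.generate_le_pullback_i_generate_gluePresieve RY RA))
        ((cTopology P).pullback_stable h ihA)
    · exact (cTopology P).superset_covering
        (Sieve.pullback_monotone h (Q.generate_le_pullback_p_generate_gluePresieve RY RA))
        ((cTopology P).pullback_stable h ihY)

variable {G : Cᵒᵖ ⥤ Type w'}

theorem isSheafFor_singleton_of_isIso {X Y : C} (f : X ⟶ Y) [IsIso f] :
    Presieve.IsSheafFor G (Presieve.singleton f) := by
  rw [Presieve.isSheafFor_iff_generate, Sieve.generate_of_singleton_isSplitEpi]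
  exact Presieve.isSheafFor_top G

theorem CDSquare.isSeparatedFor_gluePresieve {Q : CDSquare C}
    (hQ : IsPullback (G.map Q.i.op) (G.map Q.p.op) (G.map Q.e.op) (G.map Q.q.op))
    {RY : Presieve Q.Y} {RA : Presieve Q.A}
    (hY : Presieve.IsSeparatedFor G RY) (hA : Presieve.IsSeparatedFor G RA) :
    Presieve.IsSeparatedFor G (Q.gluePresieve RY RA) := by
  intro x t₁ t₂ ht₁ ht₂
  have agree : ∀ ⦃Z⦄ (g : Z ⟶ Q.X), Q.gluePresieve RY RA g →
      G.map g.op t₁ = G.map g.op t₂ :=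
    fun _ g hg => (ht₁ g hg).trans (ht₂ g hg).symm
  refine Types.ext_of_isPullback hQ (hA.ext fun _ h hh => ?_) (hY.ext fun _ h hh => ?_)
  · simpa using agree (h ≫ Q.i) (Or.inr ⟨h, hh, rfl⟩)
  · simpa using agree (h ≫ Q.p) (Or.inl ⟨h, hh, rfl⟩)

theorem CDSquare.isSheafFor_gluePresieve {Q : CDSquare C}
    (hQ : IsPullback (G.map Q.i.op) (G.map Q.p.op) (G.map Q.e.op) (G.map Q.q.op))
    {RY : Presieve Q.Y} {RA : Presieve Q.A}
    (hY : Presieve.IsSheafFor G RY) (hA : Presieve.IsSheafFor G RA)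
    (hB : Presieve.IsSeparatedFor G
      ((Sieve.generate RY).pullback Q.q ⊓ (Sieve.generate RA).pullback Q.e).arrows) :
    Presieve.IsSheafFor G (Q.gluePresieve RY RA) := by
  refine (Q.isSeparatedFor_gluePresieve hQ hY.isSeparatedFor hA.isSeparatedFor).isSheafFor
    fun x hx => ?_
  let xY : Presieve.FamilyOfElements G RY := fun _ h hh => x (h ≫ Q.p) (Or.inl ⟨h, hh, rfl⟩)
  let xA : Presieve.FamilyOfElements G RA := fun _ h hh => x (h ≫ Q.i) (Or.inr ⟨h, hh, rfl⟩)
  obtain ⟨tY, htY, -⟩ := hY xY fun _ _ _ g₁ g₂ _ _ _ _ w =>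
    hx g₁ g₂ _ _ (by simp [reassoc_of% w])
  obtain ⟨tA, htA, -⟩ := hA xA fun _ _ _ g₁ g₂ _ _ _ _ w =>
    hx g₁ g₂ _ _ (by simp [reassoc_of% w])
  have hAY : G.map Q.e.op tA = G.map Q.q.op tY := by
    refine hB.ext ?_
    rintro Z f ⟨⟨W, a, h, hh, ha⟩, ⟨W', b, k, hk, hb⟩⟩
    have hA' : G.map f.op (G.map Q.e.op tA) = G.map b.op (xA k hk) := by
      simp only [← htA k hk, ← Functor.map_comp_apply, ← op_comp, hb]
    have hY' : G.map f.op (G.map Q.q.op tY) = G.map a.op (xY h hh) := by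
      simp only [← htY h hh, ← Functor.map_comp_apply, ← op_comp, ha]
    rw [hA', hY']
    exact hx b a _ _ (by rw [reassoc_of% hb, reassoc_of% ha, Q.w])
  obtain ⟨t, hti, htp⟩ := Types.exists_of_isPullback hQ tA tY hAY
  refine ⟨t, ?_⟩
  rintro Z g (⟨h, hh, rfl⟩ | ⟨h, hh, rfl⟩)
  · simpa [htp] using htY h hh
  · simpa [hti] using htA h hh

variable (hG : ∀ Q ∈ P, IsPullback (G.map Q.i.op) (G.map Q.p.op) (G.map Q.e.op) (G.map Q.q.op))
include hG

theorem IsSimpleCover.isSeparatedFor {X : C} {R : Presieve X} (h : IsSimpleCover P X R) :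
    Presieve.IsSeparatedFor G R := by
  induction h with
  | iso f _ => exact (isSheafFor_singleton_of_isIso f).isSeparatedFor
  | glue Q hQ _ _ _ _ ihY ihA => exact Q.isSeparatedFor_gluePresieve (hG Q hQ) ihY ihA

theorem isSeparatedFor_of_mem_cTopology (hP : IsCComplete P) {X : C} {S : Sieve X}
    (hS : S ∈ cTopology P X) : Presieve.IsSeparatedFor G S.arrows := by
  obtain ⟨R, hR, hRS⟩ := hP S hS
  exact fun _ t₁ t₂ ht₁ ht₂ => (hR.isSeparatedFor hG).ext fun _ g hg =>
    (ht₁ g (hRS g hg)).trans (ht₂ g (hRS g hg)).symm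

theorem IsSimpleCover.isSheafFor (hP : IsCComplete P) {X : C} {R : Presieve X}
    (h : IsSimpleCover P X R) : Presieve.IsSheafFor G R := by
  induction h with
  | iso f _ => exact isSheafFor_singleton_of_isIso f
  | glue Q hQ _ _ hY hA ihY ihA =>
    exact Q.isSheafFor_gluePresieve (hG Q hQ) ihY ihA <| isSeparatedFor_of_mem_cTopology hG hP <|
      (cTopology P).intersection_covering
        ((cTopology P).pullback_stable Q.q hY.generate_mem_cTopology)
        ((cTopology P).pullback_stable Q.e hA.generate_mem_cTopology)

theorem isSheaf_cTopology_of_isPullback (hP : IsCComplete P) :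
    Presieve.IsSheaf (cTopology P) G := by
  intro X S hS
  obtain ⟨R, hR, hRS⟩ := hP S hS
  exact Presieve.isSheafFor_subsieve_aux G ((Sieve.generate_le_iff _ _).2 hRS)
    ((Presieve.isSheafFor_iff_generate R).1 (hR.isSheafFor hG hP)) fun _ f _ =>
      isSeparatedFor_of_mem_cTopology hG hP
        ((cTopology P).pullback_stable f hR.generate_mem_cTopology)

end

/-- If `P` is a c-complete cd-structure on `C` and a presheaf `F : Cᵒᵖ ⥤ A` sends every
distinguished square of `P` to a pullback square in `A`, then `F` is a sheaf for the
associated c-topology. -/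
theorem isSheaf_of_sends_distinguished_to_pullback
    {C : Type u} [Category.{v} C] {A : Type w} [Category.{v'} A]
    (P : Set (CDSquare C)) (hP : IsCComplete P) (F : Cᵒᵖ ⥤ A)
    (hF : ∀ Q ∈ P,
      IsPullback (F.map Q.i.op) (F.map Q.p.op) (F.map Q.e.op) (F.map Q.q.op)) :
    Presheaf.IsSheaf (cTopology P) F := fun E =>
  isSheaf_cTopology_of_isPullback (fun Q hQ => (hF Q hQ).map (coyoneda.obj (op E))) hP

end CdFormal
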